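/- Suppose σ ≠ 0. The unstructured distance to singularity of T in the Frobenius norm satisfies d_F(T) = min_{S ∈ 𝒮} ‖T − S‖_F = min_{h=1,…,n} |λ_h|, and the structured distance to singularity satisfies the sandwich bound min_{h=1,…,n} |λ_h| = d_F(T) ≤ d_F^𝒯(T) = min_{S ∈ 𝒮 ∩ 𝒯} ‖T − S‖_F ≤ min_{h=1,…,n} |λ_h|/κ(h). -/

import Mathlib

open Real Filter

noncomputable def tridiag (n : ℕ) (d s : ℝ) : Matrix (Fin n) (Fin n) ℝ :=
  Matrix.of fun i j =>
    if (i : ℕ) = (j : ℕ) then d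
    else if (i : ℕ) + 1 = (j : ℕ) ∨ (j : ℕ) + 1 = (i : ℕ) then s else 0

noncomputable def lam (n : ℕ) (δ σ : ℝ) (h : ℕ) : ℝ :=
  δ + 2 * σ * Real.cos (h * Real.pi / (n + 1))

noncomputable def kap (n h : ℕ) : ℝ :=
  Real.sqrt (1 / (n : ℝ) + 2 / ((n : ℝ) - 1) * Real.cos (h * Real.pi / (n + 1)) ^ 2)

noncomputable def evec (n h : ℕ) : Fin n → ℝ :=
  fun k => Real.sqrt (2 / (n + 1)) * Real.sin (h * (k.1 + 1) * Real.pi / (n + 1))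

noncomputable def frobNorm {n : ℕ} (A : Matrix (Fin n) (Fin n) ℝ) : ℝ :=
  Real.sqrt (∑ i, ∑ j, A i j ^ 2)

/-
The matrices `tridiag n d s` share the orthonormal eigenbasis of sine vectors, with eigenvalues
`lam n d s h`, so `T = Pᵀ diag(λ_h) P` with `P` orthogonal. Hence `|T x| ≥ min |λ_h| |x|`, and if
`S x = 0` then `min |λ_h| |x| ≤ |(T - S) x| ≤ ‖T - S‖_F |x|`; the rank-one perturbation
`S = T - λ_h u_h u_hᵀ` attains the bound. For the structured distance, `tridiag n d s` is singular
iff `lam n d s h = 0` for some `h`, and `‖tridiag n a b‖_F² = n a² + 2 (n - 1) b²` while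
`lam n a b h = a + 2 cos(hπ/(n+1)) b`: the structured distance is the least weighted distance from
`(δ, σ)` to one of these lines, which Cauchy–Schwarz computes as `|λ_h| / κ(h)`.
-/

open Matrix

theorem sq_add_mul_le_mul {p q : ℝ} (hp : 0 < p) (hq : 0 < q) (x y c : ℝ) :
    (x + c * y) ^ 2 ≤ (p * x ^ 2 + q * y ^ 2) * (1 / p + c ^ 2 / q) := by
  have h : (p * x ^ 2 + q * y ^ 2) * (1 / p + c ^ 2 / q) - (x + c * y) ^ 2
      = (c * p * x - q * y) ^ 2 / (p * q) := by
    field_simp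
    ring
  have : 0 ≤ (c * p * x - q * y) ^ 2 / (p * q) := by positivity
  linarith

theorem exists_fin_inf'_Icc_eq {α : Type*} [LinearOrder α] {n : ℕ}
    (hne : (Finset.Icc 1 n).Nonempty) (f : ℕ → α) :
    ∃ i : Fin n, (Finset.Icc 1 n).inf' hne f = f (i + 1) := by
  obtain ⟨h, hh, heq⟩ := Finset.exists_mem_eq_inf' hne f
  obtain ⟨h1, hn⟩ := Finset.mem_Icc.mp hh
  exact ⟨⟨h - 1, by omega⟩, by rw [heq, Nat.sub_add_cancel h1]⟩

theorem inf'_Icc_le_fin {α : Type*} [LinearOrder α] {n : ℕ}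
    (hne : (Finset.Icc 1 n).Nonempty) (f : ℕ → α) (i : Fin n) :
    (Finset.Icc 1 n).inf' hne f ≤ f (i + 1) :=
  Finset.inf'_le f (Finset.mem_Icc.mpr ⟨by omega, i.isLt⟩)

section Eigenbasis

variable {ι : Type*} [Fintype ι]

theorem dotProduct_eq_zero_of_mulVec_eq_smul {A : Matrix ι ι ℝ} (hA : Aᵀ = A) {u w : ι → ℝ}
    {a b : ℝ} (hu : A *ᵥ u = a • u) (hw : A *ᵥ w = b • w) (hab : a ≠ b) : u ⬝ᵥ w = 0 := by
  have h : b * (u ⬝ᵥ w) = a * (u ⬝ᵥ w) := by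
    calc b * (u ⬝ᵥ w) = u ⬝ᵥ A *ᵥ w := by rw [hw, dotProduct_smul, smul_eq_mul]
      _ = (Aᵀ *ᵥ u) ⬝ᵥ w := by rw [dotProduct_mulVec, mulVec_transpose]
      _ = a * (u ⬝ᵥ w) := by rw [hA, hu, smul_dotProduct, smul_eq_mul]
  exact (mul_left_inj' (sub_ne_zero.mpr hab)).mp (by linear_combination -h)

theorem dotProduct_self_inv_sqrt_smul {v : ι → ℝ} (hv : v ≠ 0) :
    ((√(v ⬝ᵥ v))⁻¹ • v) ⬝ᵥ ((√(v ⬝ᵥ v))⁻¹ • v) = 1 := by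
  have hpos : 0 < v ⬝ᵥ v := by simpa using dotProduct_star_self_pos_iff.mpr hv
  rw [smul_dotProduct, dotProduct_smul, smul_eq_mul, smul_eq_mul, ← mul_assoc, ← mul_inv,
    Real.mul_self_sqrt hpos.le, inv_mul_cancel₀ hpos.ne']

theorem mulVec_dotProduct_self_le {κ : Type*} [Fintype κ] (A : Matrix κ ι ℝ) (x : ι → ℝ) :
    (A *ᵥ x) ⬝ᵥ (A *ᵥ x) ≤ (∑ i, ∑ j, A i j ^ 2) * (x ⬝ᵥ x) := by
  simp only [dotProduct, mulVec, ← pow_two]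
  rw [Finset.sum_mul]
  exact Finset.sum_le_sum fun i _ => Finset.sum_mul_sq_le_sq_mul_sq _ _ _

variable [DecidableEq ι]

theorem dotProduct_self_mulVec_of_transpose_mul_self {Q : Matrix ι ι ℝ} (hQ : Qᵀ * Q = 1)
    (x : ι → ℝ) : (Q *ᵥ x) ⬝ᵥ (Q *ᵥ x) = x ⬝ᵥ x := by
  rw [dotProduct_mulVec, ← mulVec_transpose, mulVec_mulVec, hQ, one_mulVec]

variable {A P : Matrix ι ι ℝ} {μ : ι → ℝ}

theorem eq_transpose_mul_diagonal_mul (hP : P * Pᵀ = 1) (hAP : ∀ i, A *ᵥ P i = μ i • P i) :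
    A = Pᵀ * diagonal μ * P := by
  have hcomm : A * Pᵀ = Pᵀ * diagonal μ := by
    ext k i
    have h := congrFun (hAP i) k
    rw [Pi.smul_apply, smul_eq_mul] at h
    rw [mul_diagonal, transpose_apply, mul_comm (P i k), ← h]
    rfl
  rw [← hcomm, Matrix.mul_assoc, mul_eq_one_comm.mp hP, Matrix.mul_one]

theorem det_eq_prod_of_mulVec_eq_smul (hP : P * Pᵀ = 1) (hAP : ∀ i, A *ᵥ P i = μ i • P i) :
    A.det = ∏ i, μ i := by
  have hdet : P.det * P.det = 1 := by rw [← det_one (n := ι), ← hP, det_mul, det_transpose]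
  rw [eq_transpose_mul_diagonal_mul hP hAP, det_mul, det_mul, det_transpose, det_diagonal]
  linear_combination (∏ i, μ i) * hdet

theorem sq_mul_dotProduct_self_le_of_mulVec_eq_smul (hP : P * Pᵀ = 1)
    (hAP : ∀ i, A *ᵥ P i = μ i • P i) {m : ℝ} (hm0 : 0 ≤ m) (hm : ∀ i, m ≤ |μ i|) (x : ι → ℝ) :
    m ^ 2 * (x ⬝ᵥ x) ≤ (A *ᵥ x) ⬝ᵥ (A *ᵥ x) := by
  have hPt : (Pᵀ)ᵀ * Pᵀ = 1 := by rwa [transpose_transpose]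
  rw [eq_transpose_mul_diagonal_mul hP hAP, ← mulVec_mulVec, ← mulVec_mulVec,
    dotProduct_self_mulVec_of_transpose_mul_self hPt,
    ← dotProduct_self_mulVec_of_transpose_mul_self (mul_eq_one_comm.mp hP) x]
  simp only [dotProduct, mulVec_diagonal, Finset.mul_sum]
  refine Finset.sum_le_sum fun i _ => ?_
  have hμ : m ^ 2 ≤ μ i ^ 2 := by simpa only [sq_abs] using pow_le_pow_left₀ hm0 (hm i) 2
  nlinarith [mul_self_nonneg ((P *ᵥ x) i)]

end Eigenbasis

theorem le_frobNorm_sub_of_det_eq_zero {n : ℕ} {A S : Matrix (Fin n) (Fin n) ℝ} {m : ℝ}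
    (hA : ∀ x, m ^ 2 * (x ⬝ᵥ x) ≤ (A *ᵥ x) ⬝ᵥ (A *ᵥ x)) (hS : S.det = 0) :
    m ≤ frobNorm (A - S) := by
  obtain ⟨x, hx, hSx⟩ := exists_mulVec_eq_zero_iff.mpr hS
  have hpos : 0 < x ⬝ᵥ x := by simpa using dotProduct_star_self_pos_iff.mpr hx
  have hAS : (A - S) *ᵥ x = A *ᵥ x := by rw [sub_mulVec, hSx, sub_zero]
  have hsq : m ^ 2 ≤ ∑ i, ∑ j, (A - S) i j ^ 2 :=
    le_of_mul_le_mul_right ((hA x).trans (hAS ▸ mulVec_dotProduct_self_le (A - S) x)) hpos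
  exact Real.le_sqrt_of_sq_le hsq

theorem frobNorm_smul_vecMulVec_self {n : ℕ} {u : Fin n → ℝ} (hu : u ⬝ᵥ u = 1) (μ : ℝ) :
    frobNorm (μ • vecMulVec u u) = |μ| := by
  have hu' : ∑ i, u i ^ 2 = 1 := by simpa only [dotProduct, ← pow_two] using hu
  have hsum : ∑ i, ∑ j, (μ • vecMulVec u u) i j ^ 2 = μ ^ 2 := by
    simp only [Matrix.smul_apply, vecMulVec_apply, smul_eq_mul, mul_pow, ← Finset.mul_sum,
      hu', mul_one]
  rw [frobNorm, hsum, Real.sqrt_sq_eq_abs]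

theorem det_sub_smul_vecMulVec_self_eq_zero {n : ℕ} {A : Matrix (Fin n) (Fin n) ℝ}
    {u : Fin n → ℝ} {μ : ℝ} (hu : u ⬝ᵥ u = 1) (hAu : A *ᵥ u = μ • u) :
    (A - μ • vecMulVec u u).det = 0 := by
  refine exists_mulVec_eq_zero_iff.mp ⟨u, fun h => by simp [h] at hu, ?_⟩
  rw [sub_mulVec, smul_mulVec, vecMulVec_mulVec, hu, hAu]
  simp

-- Normalising the sine vectors spares computing their length; their orthogonality comes from
-- being eigenvectors of the symmetric `tridiag n 0 1` for distinct eigenvalues.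
noncomputable def tridiagEigenbasis (n : ℕ) : Matrix (Fin n) (Fin n) ℝ :=
  of fun i => (√(evec n (i + 1) ⬝ᵥ evec n (i + 1)))⁻¹ • evec n (i + 1)

section Tridiagonal

variable {n : ℕ}

theorem tridiag_transpose (d s : ℝ) : (tridiag n d s)ᵀ = tridiag n d s := by
  ext i j
  simp only [transpose_apply, tridiag, of_apply]
  split_ifs <;> first | rfl | omega

theorem tridiag_sub_tridiag (a b a' b' : ℝ) :
    tridiag n a b - tridiag n a' b' = tridiag n (a - a') (b - b') := by
  ext i j
  simp only [Matrix.sub_apply, tridiag, of_apply]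
  split_ifs <;> ring

theorem lam_sub_lam (a b a' b' : ℝ) (h : ℕ) :
    lam n a b h - lam n a' b' h = lam n (a - a') (b - b') h := by
  simp only [lam]
  ring

theorem lam_eq_add_mul (a b : ℝ) (h : ℕ) :
    lam n a b h = a + 2 * Real.cos (h * π / (n + 1)) * b := by
  rw [lam]
  ring

-- The boundary values `u 0 = u (n + 1) = 0` stand in for the missing neighbours of the first and
-- last rows, so the row sum may be taken over `range (n + 2)`.
theorem tridiag_mulVec_shift (d s : ℝ) (u : ℕ → ℝ) (hu0 : u 0 = 0) (hun : u (n + 1) = 0)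
    (k : Fin n) :
    (tridiag n d s *ᵥ fun j => u (j + 1)) k = d * u (k + 1) + s * (u k + u (k + 2)) := by
  set F : ℕ → ℝ := fun i =>
    (if i = k + 1 then d * u i else 0) + (if i = k + 2 then s * u i else 0)
      + (if i = k then s * u i else 0) with hF
  have hterm : ∀ j : Fin n, tridiag n d s k j * u (j + 1) = F (j + 1) := by
    intro j
    simp only [tridiag, of_apply, hF]
    split_ifs <;> first | omega | ring
  have hext : ∑ j ∈ Finset.range n, F (j + 1) = ∑ i ∈ Finset.range (n + 2), F i := by
    rw [Finset.sum_range_succ, Finset.sum_range_succ']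
    simp [hF, hu0, hun]
  calc (tridiag n d s *ᵥ fun j => u (j + 1)) k = ∑ j ∈ Finset.range n, F (j + 1) := by
        simp only [mulVec, dotProduct, hterm]
        exact Fin.sum_univ_eq_sum_range (fun j => F (j + 1)) n
    _ = d * u (k + 1) + s * u (k + 2) + s * u k := by
        rw [hext]
        simp only [hF, Finset.sum_add_distrib, Finset.sum_ite_eq', Finset.mem_range,
          show (k : ℕ) + 1 < n + 2 by omega, show (k : ℕ) + 2 < n + 2 by omega,
          show (k : ℕ) < n + 2 by omega, if_true]
    _ = d * u (k + 1) + s * (u k + u (k + 2)) := by ring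

theorem tridiag_mulVec_evec (d s : ℝ) (h : ℕ) :
    tridiag n d s *ᵥ evec n h = lam n d s h • evec n h := by
  set θ : ℝ := h * π / (n + 1)
  set u : ℕ → ℝ := fun j => √(2 / (n + 1)) * Real.sin (j * θ)
  have hu : evec n h = fun k : Fin n => u (k + 1) := by
    ext k
    simp only [evec, u, θ]
    push_cast
    congr 2
    ring
  have hun : u (n + 1) = 0 := by
    simp only [u, θ]
    rw [show ((n + 1 : ℕ) : ℝ) * (h * π / (n + 1)) = h * π by push_cast; field_simp,
      Real.sin_nat_mul_pi, mul_zero]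
  have hrec : ∀ j : ℕ, u j + u (j + 2) = 2 * Real.cos θ * u (j + 1) := fun j => by
    simp only [u]
    rw [show ((j + 2 : ℕ) : ℝ) * θ = (j + 1 : ℕ) * θ + θ by push_cast; ring,
      show (j : ℝ) * θ = (j + 1 : ℕ) * θ - θ by push_cast; ring, Real.sin_add, Real.sin_sub]
    ring
  ext k
  rw [hu, tridiag_mulVec_shift d s u (by simp [u]) hun, Pi.smul_apply, smul_eq_mul, lam]
  linear_combination s * hrec k

theorem evec_ne_zero {h : ℕ} (h1 : 1 ≤ h) (hn : h ≤ n) : evec n h ≠ 0 := by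
  intro h0
  have hpos : 0 < evec n h ⟨0, by omega⟩ := by
    refine mul_pos (Real.sqrt_pos.mpr (by positivity)) (Real.sin_pos_of_pos_of_lt_pi ?_ ?_)
    · have : (0 : ℝ) < h := by exact_mod_cast h1
      positivity
    · have : (h : ℝ) < n + 1 := by exact_mod_cast Nat.lt_succ_of_le hn
      rw [div_lt_iff₀ (by positivity)]
      simp only [CharP.cast_eq_zero, zero_add, mul_one]
      nlinarith [Real.pi_pos]
  simp [h0] at hpos

theorem lam_injective (d : ℝ) {s : ℝ} (hs : s ≠ 0) :
    Function.Injective fun i : Fin n => lam n d s (i + 1) := by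
  intro i j hij
  have hmem : ∀ k : Fin n, ((k + 1 : ℕ) : ℝ) * π / (n + 1) ∈ Set.Icc 0 π := fun k => by
    have : ((k + 1 : ℕ) : ℝ) ≤ n + 1 := by exact_mod_cast Nat.succ_le_succ k.isLt.le
    refine ⟨by positivity, ?_⟩
    rw [div_le_iff₀ (by positivity)]
    nlinarith [Real.pi_pos]
  have hcos := Real.injOn_cos (hmem i) (hmem j)
    (by simpa [lam, hs] using hij)
  have : ((i + 1 : ℕ) : ℝ) = (j + 1 : ℕ) := by
    field_simp at hcos
    nlinarith [Real.pi_pos]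
  exact Fin.ext (by exact_mod_cast Nat.succ_injective (by exact_mod_cast this))

theorem tridiagEigenbasis_apply (i : Fin n) :
    tridiagEigenbasis n i = (√(evec n (i + 1) ⬝ᵥ evec n (i + 1)))⁻¹ • evec n (i + 1) :=
  rfl

theorem tridiag_mulVec_tridiagEigenbasis (d s : ℝ) (i : Fin n) :
    tridiag n d s *ᵥ tridiagEigenbasis n i = lam n d s (i + 1) • tridiagEigenbasis n i := by
  rw [tridiagEigenbasis_apply, mulVec_smul, tridiag_mulVec_evec, smul_comm]

theorem tridiagEigenbasis_dotProduct_self (i : Fin n) :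
    tridiagEigenbasis n i ⬝ᵥ tridiagEigenbasis n i = 1 := by
  rw [tridiagEigenbasis_apply]
  exact dotProduct_self_inv_sqrt_smul (evec_ne_zero (Nat.le_add_left 1 i) i.isLt)

theorem tridiagEigenbasis_mul_transpose : tridiagEigenbasis n * (tridiagEigenbasis n)ᵀ = 1 := by
  ext i j
  change tridiagEigenbasis n i ⬝ᵥ tridiagEigenbasis n j = (1 : Matrix (Fin n) (Fin n) ℝ) i j
  by_cases hij : i = j
  · rw [hij, tridiagEigenbasis_dotProduct_self, one_apply_eq]
  · rw [one_apply_ne hij]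
    exact dotProduct_eq_zero_of_mulVec_eq_smul (tridiag_transpose 0 1)
      (tridiag_mulVec_tridiagEigenbasis 0 1 i) (tridiag_mulVec_tridiagEigenbasis 0 1 j)
      ((lam_injective 0 one_ne_zero).ne hij)

theorem det_tridiag (d s : ℝ) : (tridiag n d s).det = ∏ i : Fin n, lam n d s (i + 1) :=
  det_eq_prod_of_mulVec_eq_smul tridiagEigenbasis_mul_transpose
    (tridiag_mulVec_tridiagEigenbasis d s)

theorem sum_sq_tridiag (a b : ℝ) :
    ∑ i, ∑ j, tridiag n a b i j ^ 2 = n * a ^ 2 + 2 * ((n - 1 : ℕ) : ℝ) * b ^ 2 := by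
  have hentry : ∀ i j : Fin n, tridiag n a b i j ^ 2 = (if i = j then a ^ 2 else 0)
      + (if (j : ℕ) = i + 1 then b ^ 2 else 0) + (if (i : ℕ) = j + 1 then b ^ 2 else 0) := by
    intro i j
    simp only [tridiag, of_apply, Fin.ext_iff]
    split_ifs <;> first | omega | ring
  have hrow : ∀ i : Fin n, ∑ j : Fin n, (if (j : ℕ) = i + 1 then b ^ 2 else 0)
      = if (i : ℕ) + 1 < n then b ^ 2 else 0 := fun i => by
    rw [Fin.sum_univ_eq_sum_range (fun j => if j = i + 1 then b ^ 2 else 0), Finset.sum_ite_eq']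
    simp only [Finset.mem_range]
  have hsuper : ∑ i : Fin n, ∑ j : Fin n, (if (j : ℕ) = i + 1 then b ^ 2 else 0)
      = ((n - 1 : ℕ) : ℝ) * b ^ 2 := by
    simp only [hrow]
    rw [Fin.sum_univ_eq_sum_range (fun i => if i + 1 < n then b ^ 2 else 0)]
    rcases n with _ | m
    · simp
    · rw [Finset.sum_range_succ, if_neg (lt_irrefl _), add_zero,
        Finset.sum_congr rfl fun i hi => if_pos (by simpa using hi)]
      simp
  simp only [hentry, Finset.sum_add_distrib]
  rw [Finset.sum_comm (f := fun i j : Fin n => if (i : ℕ) = j + 1 then b ^ 2 else 0), hsuper]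
  simp only [Finset.sum_ite_eq, Finset.mem_univ, if_true, Finset.sum_const, Finset.card_univ,
    Fintype.card_fin, nsmul_eq_mul]
  ring

theorem frobNorm_tridiag (hn : 1 ≤ n) (a b : ℝ) :
    frobNorm (tridiag n a b) = √(n * a ^ 2 + 2 * (n - 1) * b ^ 2) := by
  rw [frobNorm, sum_sq_tridiag, Nat.cast_sub hn, Nat.cast_one]

theorem kap_eq_sqrt (hn : 2 ≤ n) (h : ℕ) :
    kap n h = √(1 / n + (2 * Real.cos (h * π / (n + 1))) ^ 2 / (2 * (n - 1))) := by
  have hn1 : (n : ℝ) - 1 ≠ 0 := by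
    have : (2 : ℝ) ≤ n := by exact_mod_cast hn
    linarith
  rw [kap]
  congr 2
  field_simp

theorem abs_lam_div_kap_le_frobNorm_tridiag (hn : 2 ≤ n) (a b : ℝ) (h : ℕ) :
    |lam n a b h| / kap n h ≤ frobNorm (tridiag n a b) := by
  have hn' : (2 : ℝ) ≤ n := by exact_mod_cast hn
  have hp : (0 : ℝ) < n := by linarith
  have hq : (0 : ℝ) < 2 * (n - 1) := by linarith
  set c := 2 * Real.cos (h * π / (n + 1))
  have hK : 0 < 1 / (n : ℝ) + c ^ 2 / (2 * (n - 1)) := by positivity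
  rw [div_le_iff₀ (kap_eq_sqrt hn h ▸ Real.sqrt_pos.mpr hK), kap_eq_sqrt hn h,
    frobNorm_tridiag (by omega), ← Real.sqrt_mul (by positivity), lam_eq_add_mul,
    ← Real.sqrt_sq_eq_abs]
  exact Real.sqrt_le_sqrt (sq_add_mul_le_mul hp hq a b c)

theorem exists_lam_eq_frobNorm_tridiag_eq (hn : 2 ≤ n) (h : ℕ) (t : ℝ) :
    ∃ a b : ℝ, lam n a b h = t ∧ frobNorm (tridiag n a b) = |t| / kap n h := by
  have hn' : (2 : ℝ) ≤ n := by exact_mod_cast hn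
  have hp : (0 : ℝ) < n := by linarith
  have hq : (0 : ℝ) < 2 * (n - 1) := by linarith
  set c := 2 * Real.cos (h * π / (n + 1))
  set K := 1 / (n : ℝ) + c ^ 2 / (2 * (n - 1)) with hKdef
  have hK : 0 < K := by positivity
  refine ⟨t / (n * K), c * t / (2 * (n - 1) * K), ?_, ?_⟩
  · rw [lam_eq_add_mul]
    field_simp
    rw [hKdef]
    field_simp
    ring
  · rw [frobNorm_tridiag (by omega), kap_eq_sqrt hn h, ← hKdef, ← Real.sqrt_sq_eq_abs,
      ← Real.sqrt_div' _ hK.le]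
    congr 1
    field_simp
    rw [hKdef]
    field_simp

theorem isLeast_frobNorm_sub_of_det_eq_zero (hne : (Finset.Icc 1 n).Nonempty) (δ σ : ℝ) :
    IsLeast {r : ℝ | ∃ S : Matrix (Fin n) (Fin n) ℝ, S.det = 0 ∧ r = frobNorm (tridiag n δ σ - S)}
      ((Finset.Icc 1 n).inf' hne fun h => |lam n δ σ h|) := by
  constructor
  · obtain ⟨i, hi⟩ := exists_fin_inf'_Icc_eq hne fun h => |lam n δ σ h|
    have hu := tridiagEigenbasis_dotProduct_self i
    refine ⟨_, det_sub_smul_vecMulVec_self_eq_zero hu (tridiag_mulVec_tridiagEigenbasis δ σ i), ?_⟩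
    rw [sub_sub_cancel, frobNorm_smul_vecMulVec_self hu, hi]
  · rintro r ⟨S, hS, rfl⟩
    refine le_frobNorm_sub_of_det_eq_zero (sq_mul_dotProduct_self_le_of_mulVec_eq_smul
      tridiagEigenbasis_mul_transpose (tridiag_mulVec_tridiagEigenbasis δ σ) ?_
      (inf'_Icc_le_fin hne _)) hS
    exact Finset.le_inf' hne _ fun h _ => abs_nonneg _

theorem isLeast_frobNorm_sub_tridiag_of_det_eq_zero (hn : 2 ≤ n)
    (hne : (Finset.Icc 1 n).Nonempty) (δ σ : ℝ) :
    IsLeast {r : ℝ | ∃ S : Matrix (Fin n) (Fin n) ℝ, S.det = 0 ∧ (∃ d s : ℝ, S = tridiag n d s) ∧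
        r = frobNorm (tridiag n δ σ - S)}
      ((Finset.Icc 1 n).inf' hne fun h => |lam n δ σ h| / kap n h) := by
  constructor
  · obtain ⟨i, hi⟩ := exists_fin_inf'_Icc_eq hne fun h => |lam n δ σ h| / kap n h
    obtain ⟨a, b, hab, hfrob⟩ := exists_lam_eq_frobNorm_tridiag_eq hn (i + 1) (lam n δ σ (i + 1))
    refine ⟨tridiag n (δ - a) (σ - b), ?_, ⟨_, _, rfl⟩, ?_⟩
    · rw [det_tridiag]
      exact Finset.prod_eq_zero (Finset.mem_univ i) (by rw [← lam_sub_lam, hab, sub_self])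
    · rw [tridiag_sub_tridiag, sub_sub_cancel, sub_sub_cancel, hfrob, hi]
  · rintro r ⟨S, hS, ⟨d, s, rfl⟩, rfl⟩
    obtain ⟨i, -, hi⟩ := Finset.prod_eq_zero_iff.mp (det_tridiag d s ▸ hS)
    calc (Finset.Icc 1 n).inf' hne (fun h => |lam n δ σ h| / kap n h)
        ≤ |lam n δ σ (i + 1)| / kap n (i + 1) := inf'_Icc_le_fin hne _ i
      _ = |lam n (δ - d) (σ - s) (i + 1)| / kap n (i + 1) := by rw [← lam_sub_lam, hi, sub_zero]
      _ ≤ frobNorm (tridiag n (δ - d) (σ - s)) := abs_lam_div_kap_le_frobNorm_tridiag hn _ _ _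
      _ = frobNorm (tridiag n δ σ - tridiag n d s) := by rw [tridiag_sub_tridiag]

end Tridiagonal

/-- for `σ ≠ 0`, the unstructured distance to singularity of `T` in the Frobenius
norm is `min_h |λ_h|` (attained), and the structured distance `d_F^𝒯(T)` (also attained) satisfies
`min_h |λ_h| ≤ d_F^𝒯(T) ≤ min_h |λ_h|/κ(h)`. -/
theorem stmt_9 (n : ℕ) (hn : 2 ≤ n) (δ σ : ℝ) :
    IsLeast {r : ℝ | ∃ S : Matrix (Fin n) (Fin n) ℝ,
        S.det = 0 ∧ r = frobNorm (tridiag n δ σ - S)}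
      ((Finset.Icc 1 n).inf' (Finset.nonempty_Icc.mpr (by omega))
        fun h => |lam n δ σ h|) ∧
    ∃ dT : ℝ,
      IsLeast {r : ℝ | ∃ S : Matrix (Fin n) (Fin n) ℝ,
          S.det = 0 ∧ (∃ d s : ℝ, S = tridiag n d s) ∧
          r = frobNorm (tridiag n δ σ - S)} dT ∧
      ((Finset.Icc 1 n).inf' (Finset.nonempty_Icc.mpr (by omega))
        fun h => |lam n δ σ h|) ≤ dT ∧
      dT ≤ (Finset.Icc 1 n).inf' (Finset.nonempty_Icc.mpr (by omega))
        fun h => |lam n δ σ h| / kap n h := by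
  have hne : (Finset.Icc 1 n).Nonempty := Finset.nonempty_Icc.mpr (by omega)
  have hsingular := isLeast_frobNorm_sub_of_det_eq_zero hne δ σ
  have htridiag := isLeast_frobNorm_sub_tridiag_of_det_eq_zero hn hne δ σ
  obtain ⟨S, hS, -, hdist⟩ := htridiag.1
  exact ⟨hsingular, _, htridiag, hsingular.2 ⟨S, hS, hdist⟩, le_rfl⟩
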